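/- The function g(t) = (t²+1)·((t+1)·√(t²+1) − 2√2·t) / ((t²+t+1)·(t−1)²) satisfies √2/2 < g(t) < 1 for all t > 1, tends to √2/2 as t → 1⁺, and tends to 1 as t → +∞; in particular g maps (1, ∞) onto (√2/2, 1). -/

import Mathlib

/-! Multiplying numerator and denominator of `g` by the conjugate `(t+1)√(t²+1) + 2√2 t`
and using `(t+1)²(t²+1) - 8t² = (t-1)²(t²+4t+1)` cancels the double zero at `t = 1`. The
resulting expression `gRat` is continuous on `[0, ∞)` and invariant under `t ↦ t⁻¹`, so the
limits of `g` at `1⁺` and at `∞` are `gRat 1 = √2/2` and `gRat 0 = 1`. The two strict bounds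
are polynomial inequalities after isolating and squaring the radical, and the intermediate
value theorem gives the image. -/

noncomputable def g (t : ℝ) : ℝ :=
  (t ^ 2 + 1) * ((t + 1) * Real.sqrt (t ^ 2 + 1) - 2 * Real.sqrt 2 * t) /
    ((t ^ 2 + t + 1) * (t - 1) ^ 2)

open Real Filter Topology Set

noncomputable def gRat (t : ℝ) : ℝ :=
  (t ^ 2 + 1) * (t ^ 2 + 4 * t + 1) /
    ((t ^ 2 + t + 1) * ((t + 1) * √(t ^ 2 + 1) + 2 * √2 * t))

lemma conj_pos {t : ℝ} (ht : 0 ≤ t) : 0 < (t + 1) * √(t ^ 2 + 1) + 2 * √2 * t := by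
  have : 0 < √(t ^ 2 + 1) := sqrt_pos.2 (by positivity)
  positivity

lemma gRat_denom_pos {t : ℝ} (ht : 0 ≤ t) :
    0 < (t ^ 2 + t + 1) * ((t + 1) * √(t ^ 2 + 1) + 2 * √2 * t) :=
  mul_pos (by positivity) (conj_pos ht)

lemma mul_conj_eq (t : ℝ) :
    ((t + 1) * √(t ^ 2 + 1) - 2 * √2 * t) * ((t + 1) * √(t ^ 2 + 1) + 2 * √2 * t) =
      (t - 1) ^ 2 * (t ^ 2 + 4 * t + 1) := by
  linear_combination (t + 1) ^ 2 * sq_sqrt (by positivity : (0 : ℝ) ≤ t ^ 2 + 1) -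
    4 * t ^ 2 * sq_sqrt (by norm_num : (0 : ℝ) ≤ 2)

lemma g_eq_gRat {t : ℝ} (ht : 0 ≤ t) (ht1 : t ≠ 1) : g t = gRat t := by
  rw [g, gRat, div_eq_div_iff (by positivity) (gRat_denom_pos ht).ne']
  linear_combination (t ^ 2 + 1) * (t ^ 2 + t + 1) * mul_conj_eq t

lemma gRat_inv {t : ℝ} (ht : 0 < t) : gRat t⁻¹ = gRat t := by
  have hs : √(t⁻¹ ^ 2 + 1) = √(t ^ 2 + 1) / t := by
    rw [show t⁻¹ ^ 2 + 1 = (t ^ 2 + 1) / t ^ 2 by field_simp; ring, sqrt_div' _ (sq_nonneg t),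
      sqrt_sq ht.le]
  rw [gRat, gRat, hs]
  field_simp
  ring

lemma continuousAt_gRat {t : ℝ} (ht : 0 ≤ t) : ContinuousAt gRat t :=
  ContinuousAt.div (by fun_prop) (by fun_prop) (gRat_denom_pos ht).ne'

lemma gRat_zero : gRat 0 = 1 := by
  norm_num [gRat]

lemma gRat_one : gRat 1 = √2 / 2 := by
  rw [gRat, div_eq_div_iff (gRat_denom_pos zero_le_one).ne' two_ne_zero]
  norm_num
  linear_combination (-12) * sq_sqrt (by norm_num : (0 : ℝ) ≤ 2)

lemma gRat_lt_one {t : ℝ} (ht : 1 ≤ t) : gRat t < 1 := by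
  have hs : t < √(t ^ 2 + 1) := (lt_sqrt (by linarith)).2 (by linarith)
  have hr : (1.41 : ℝ) < √2 := by
    nlinarith [sq_sqrt (by norm_num : (0 : ℝ) ≤ 2), sqrt_nonneg 2]
  rw [gRat, div_lt_one (gRat_denom_pos (by linarith))]
  nlinarith [mul_lt_mul_of_pos_left hs (by linarith : (0 : ℝ) < t + 1),
    mul_lt_mul_of_pos_left hr (by linarith : (0 : ℝ) < t)]

lemma sqrt_two_div_two_lt_gRat {t : ℝ} (ht : 0 ≤ t) (ht1 : t ≠ 1) : √2 / 2 < gRat t := by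
  have hsq : (√2 * (t + 1) * (t ^ 2 + t + 1) * √(t ^ 2 + 1)) ^ 2 <
      (2 * (t ^ 4 + 2 * t ^ 3 + 2 * t + 1)) ^ 2 := by
    rw [mul_pow, mul_pow, mul_pow, sq_sqrt zero_le_two, sq_sqrt (by positivity),
      ← sub_pos]
    calc (0 : ℝ)
        < 2 * (t - 1) ^ 2 *
            (t ^ 6 + 6 * t ^ 5 + 10 * t ^ 4 + 8 * t ^ 3 + 10 * t ^ 2 + 6 * t + 1) := by
          positivity
      _ = _ := by ring
  have key := lt_of_pow_lt_pow_left₀ 2 (by positivity) hsq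
  rw [gRat, lt_div_iff₀ (gRat_denom_pos ht)]
  linear_combination key / 2 + t * (t ^ 2 + t + 1) * sq_sqrt (by norm_num : (0 : ℝ) ≤ 2)

lemma eqOn_g_gRat : EqOn g gRat (Ioi 1) :=
  fun _ ht => g_eq_gRat (zero_le_one.trans (le_of_lt ht)) (ne_of_gt ht)

lemma continuousOn_g : ContinuousOn g (Ioi 1) :=
  ContinuousOn.congr
    (fun _ ht => (continuousAt_gRat (zero_le_one.trans (le_of_lt ht))).continuousWithinAt)
    eqOn_g_gRat

lemma tendsto_g_nhdsGT_one : Tendsto g (𝓝[>] 1) (𝓝 (√2 / 2)) := by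
  rw [← gRat_one]
  exact ((continuousAt_gRat zero_le_one).tendsto.mono_left nhdsWithin_le_nhds).congr'
    (eventuallyEq_nhdsWithin_of_eqOn eqOn_g_gRat).symm

lemma tendsto_g_atTop : Tendsto g atTop (𝓝 1) := by
  rw [← gRat_zero]
  refine ((continuousAt_gRat le_rfl).tendsto.comp tendsto_inv_atTop_zero).congr' ?_
  filter_upwards [eventually_gt_atTop 1] with t ht
  rw [Function.comp_apply, gRat_inv (by linarith), eqOn_g_gRat ht]

theorem stmt_14 :
    (∀ t ∈ Set.Ioi (1 : ℝ), Real.sqrt 2 / 2 < g t ∧ g t < 1) ∧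
    Filter.Tendsto g (nhdsWithin 1 (Set.Ioi (1 : ℝ))) (nhds (Real.sqrt 2 / 2)) ∧
    Filter.Tendsto g Filter.atTop (nhds 1) ∧
    g '' Set.Ioi (1 : ℝ) = Set.Ioo (Real.sqrt 2 / 2) 1 := by
  have bounds : ∀ t ∈ Ioi (1 : ℝ), √2 / 2 < g t ∧ g t < 1 := fun t ht => by
    rw [eqOn_g_gRat ht]
    exact ⟨sqrt_two_div_two_lt_gRat (zero_le_one.trans (le_of_lt ht)) (ne_of_gt ht),
      gRat_lt_one (le_of_lt ht)⟩
  refine ⟨bounds, tendsto_g_nhdsGT_one, tendsto_g_atTop, ?_⟩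
  refine Subset.antisymm (fun _ ⟨t, ht, hgt⟩ => hgt ▸ bounds t ht) ?_
  exact isPreconnected_Ioi.intermediate_value_Ioo (le_principal_iff.2 self_mem_nhdsWithin)
    (le_principal_iff.2 (Ioi_mem_atTop 1)) continuousOn_g tendsto_g_nhdsGT_one tendsto_g_atTop
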